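/- Let n ≥ 1, let p : ℕ × ℕ × ℕ × ℕ → ℝ be a segment success-probability function with p(a,b,r,c) ∈ (0,1] for all arguments, and set f = log ∘ p. Define D(j,m) by the recurrence D(j,1) = max over r, c ∈ {1,…,j} of f(1,j,r,c), and for m ≥ 2, D(j,m) = max over k ∈ {m,…,j} of [ D(k−1, m−1) + max over r, c ∈ {k,…,j} of f(k,j,r,c) ]. Let p_r ∈ (0,1). If D(n,m) ≥ log(1 − p_r) for some m ≤ n, then there exists a partition of {1,…,n} into m consecutive nonempty segments {a_i,…,b_i}, with indices r_i, c_i ∈ {a_i,…,b_i} for each segment, such that the product Π_{i=1}^m p(a_i, b_i, r_i, c_i) ≥ 1 − p_r. -/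

import Mathlib

open Finset

/-- Termination criterion of PRO-SPECT: if the dynamic program value `D n m` reaches
`log (1 - p_r)`, then there is a partition of `{1,…,n}` into `m` consecutive nonempty
segments, with release and collect indices in each segment, whose product of segment
success probabilities is at least `1 - p_r`. -/
theorem prospect_termination (n : ℕ) (hn : 1 ≤ n)
    (p : ℕ × ℕ × ℕ × ℕ → ℝ) (hp : ∀ x, 0 < p x ∧ p x ≤ 1)
    (f : ℕ × ℕ × ℕ × ℕ → ℝ) (hf : ∀ x, f x = Real.log (p x))
    (D : ℕ → ℕ → ℝ)
    (hbase : ∀ j, 1 ≤ j → j ≤ n →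
      IsGreatest {s : ℝ | ∃ r c : ℕ,
        r ∈ Finset.Icc 1 j ∧ c ∈ Finset.Icc 1 j ∧ s = f (1, j, r, c)} (D j 1))
    (hrec : ∀ j m, 2 ≤ m → m ≤ j → j ≤ n →
      IsGreatest {s : ℝ | ∃ k r c : ℕ,
        k ∈ Finset.Icc m j ∧ r ∈ Finset.Icc k j ∧ c ∈ Finset.Icc k j ∧
        s = D (k - 1) (m - 1) + f (k, j, r, c)} (D j m))
    (p_r : ℝ) (hpr : 0 < p_r ∧ p_r < 1)
    (m : ℕ) (hm1 : 1 ≤ m) (hmn : m ≤ n)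
    (hD : D n m ≥ Real.log (1 - p_r)) :
    ∃ a r c : ℕ → ℕ,
      a 1 = 1 ∧
      (∀ i, 1 ≤ i → i < m → a i < a (i + 1)) ∧
      a m ≤ n ∧
      (∀ i, 1 ≤ i → i ≤ m →
        r i ∈ Finset.Icc (a i) (if i < m then a (i + 1) - 1 else n) ∧
        c i ∈ Finset.Icc (a i) (if i < m then a (i + 1) - 1 else n)) ∧
      (∏ i ∈ Finset.Icc 1 m,
        p (a i, (if i < m then a (i + 1) - 1 else n), r i, c i)) ≥ 1 - p_r := by
  have key : ∀ m, 1 ≤ m → ∀ j, m ≤ j → j ≤ n →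
      ∃ a r c : ℕ → ℕ,
        a 1 = 1 ∧
        (∀ i, 1 ≤ i → i < m → a i < a (i + 1)) ∧
        a m ≤ j ∧
        (∀ i, 1 ≤ i → i ≤ m →
          r i ∈ Finset.Icc (a i) (if i < m then a (i + 1) - 1 else j) ∧
          c i ∈ Finset.Icc (a i) (if i < m then a (i + 1) - 1 else j)) ∧
        (∑ i ∈ Finset.Icc 1 m,
          f (a i, (if i < m then a (i + 1) - 1 else j), r i, c i)) = D j m := by
    intro M
    induction M with
    | zero => omega
    | succ M ih =>
      intro _ j hmj hjn
      by_cases hm0 : M = 0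
      · subst hm0
        obtain ⟨r0, c0, hr0, hc0, hs⟩ := (hbase j (by omega) hjn).1
        refine ⟨fun _ => 1, fun _ => r0, fun _ => c0, rfl,
          ?_, by exact hmj, ?_, ?_⟩
        · intro i h1 h2; omega
        · intro i hi1 hi2
          have : i = 1 := by omega
          subst this
          simp only [lt_irrefl, if_neg (lt_irrefl 1)]
          exact ⟨hr0, hc0⟩
        · simp [hs]
      · have h2 : 2 ≤ M + 1 := by omega
        obtain ⟨k, rm, cm, hk, hrm, hcm, hsum⟩ := (hrec j (M+1) h2 hmj hjn).1
        simp only [Nat.add_sub_cancel] at hsum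
        rw [Finset.mem_Icc] at hk
        obtain ⟨a', r', c', ha1, hmono, hale, hrc, hsum'⟩ :=
          ih (by omega) (k-1) (by omega) (by omega)
        refine ⟨fun i => if i = M+1 then k else a' i,
                fun i => if i = M+1 then rm else r' i,
                fun i => if i = M+1 then cm else c' i, ?_, ?_, ?_, ?_, ?_⟩
        · simp only [if_neg (by omega : ¬ (1 = M+1))]; exact ha1
        · intro i hi1 hi2
          by_cases him : i = M
          · simp only [if_neg (by omega : ¬ (i = M+1)),
              if_pos (by omega : i+1 = M+1)]
            rw [him]
            omega
          · simp only [if_neg (by omega : ¬ (i = M+1)),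
              if_neg (by omega : ¬ (i+1 = M+1))]
            exact hmono i hi1 (by omega)
        · simp only [if_pos rfl]; exact hk.2
        · intro i hi1 hi2
          by_cases hitop : i = M + 1
          · subst hitop
            simp only [if_pos rfl, if_neg (lt_irrefl (M+1))]
            exact ⟨hrm, hcm⟩
          · have hile : i ≤ M := by omega
            by_cases him : i = M
            · simp only [if_neg (by omega : ¬ (i = M+1)),
                if_pos (by omega : i+1 = M+1), if_pos (by omega : i < M+1)]
              have := hrc i hi1 (le_of_eq him)
              simp only [if_neg (by omega : ¬ (i < M))] at this
              exact this
            · simp only [if_neg (by omega : ¬ (i = M+1)),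
                if_neg (by omega : ¬ (i+1 = M+1)),
                if_pos (by omega : i < M+1)]
              have := hrc i hi1 hile
              simp only [if_pos (by omega : i < M)] at this
              exact this
        · rw [Finset.sum_Icc_succ_top (by omega : 1 ≤ M+1)]
          have hcong : ∑ i ∈ Finset.Icc 1 M,
              f ((if i = M+1 then k else a' i),
                 (if i < M+1 then (if i+1 = M+1 then k else a' (i+1)) - 1 else j),
                 (if i = M+1 then rm else r' i),
                 (if i = M+1 then cm else c' i)) =
              ∑ i ∈ Finset.Icc 1 M,
              f (a' i, (if i < M then a' (i+1) - 1 else k - 1), r' i, c' i) := by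
            apply Finset.sum_congr rfl
            intro i hi
            rw [Finset.mem_Icc] at hi
            by_cases him : i = M
            · simp only [if_neg (by omega : ¬ (i = M+1)),
                if_pos (by omega : i < M+1), if_pos (by omega : i+1 = M+1),
                if_neg (by omega : ¬ (i < M))]
            · simp only [if_neg (by omega : ¬ (i = M+1)),
                if_pos (by omega : i < M+1),
                if_neg (by omega : ¬ (i+1 = M+1)),
                if_pos (by omega : i < M)]
          rw [hcong, hsum']
          simp only [if_pos rfl, if_neg (lt_irrefl (M+1))]
          exact hsum.symm
  obtain ⟨a, r, c, ha1, hmono, hale, hrc, hsum⟩ := key m hm1 n hmn le_rfl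
  refine ⟨a, r, c, ha1, hmono, hale, hrc, ?_⟩
  set g : ℕ → ℝ := fun i => p (a i, (if i < m then a (i + 1) - 1 else n), r i, c i)
    with hg
  have hgpos : ∀ i ∈ Finset.Icc 1 m, 0 < g i := fun i _ => (hp _).1
  have hprodpos : 0 < ∏ i ∈ Finset.Icc 1 m, g i := Finset.prod_pos hgpos
  have hlog : Real.log (∏ i ∈ Finset.Icc 1 m, g i) = D n m := by
    rw [Real.log_prod (fun i hi => ne_of_gt (hgpos i hi)), ← hsum]
    exact Finset.sum_congr rfl fun i _ => (hf _).symm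
  have h1pr : (0:ℝ) < 1 - p_r := by linarith [hpr.2]
  have : Real.log (1 - p_r) ≤ Real.log (∏ i ∈ Finset.Icc 1 m, g i) := by
    rw [hlog]; exact hD
  calc (1:ℝ) - p_r = Real.exp (Real.log (1 - p_r)) := (Real.exp_log h1pr).symm
    _ ≤ Real.exp (Real.log (∏ i ∈ Finset.Icc 1 m, g i)) := Real.exp_le_exp.mpr this
    _ = ∏ i ∈ Finset.Icc 1 m, g i := Real.exp_log hprodpos
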